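/- For all integers n ≥ 0 and k ≥ 1, the determinant of the n×n matrix over ℚ(q) with entries q^{(i-j)(i-j-1)/2} · ([2i+k+1]/[i+j+k]) · [i+j+k choose i-j+1] for 0 ≤ j ≤ i+1 and 0 for j > i+1, 0 ≤ i, j ≤ n-1, equals [2n+k-1 choose n]. -/

import Mathlib

/-!
The matrix is lower Hessenberg with every superdiagonal entry equal to `q`, so expanding along
the first row gives two terms. The minor obtained by deleting column `1` is not of the original
shape: its first column is the original first column shifted down. One therefore works with the
two-parameter family `borderedMatrix n k s`, which is closed under both minors: since
`hessEntry k (i + 1) (j + 1) = hessEntry (k + 2) i j`, deleting column `0` gives the family at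
`(k + 2s + 2, 0)` and deleting column `1` the family at `(k, s + 1)`. The closed form
`borderedDet` then follows by induction on `n`; the inductive step is the `q`-analogue
`[a + b][b + c] - q^b [a][c] = [b][a + b + c]` of `(a + b)(b + c) - ac = b(a + b + c)`.
-/

/-- The indeterminate `q` in the field `ℚ(q)` of rational functions. -/
noncomputable def qq : RatFunc ℚ := RatFunc.X

/-- The `q`-integer `[n] = 1 + q + ⋯ + q^{n-1}`. -/
noncomputable def qInt (n : ℕ) : RatFunc ℚ := ∑ i ∈ Finset.range n, qq ^ i

/-- The `q`-factorial `[n]! = [1][2]⋯[n]`. -/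
noncomputable def qFact (n : ℕ) : RatFunc ℚ := ∏ i ∈ Finset.range n, qInt (i + 1)

/-- The Gaussian `q`-binomial coefficient `[a choose b] = [a]!/([b]![a-b]!)` for `b ≤ a`,
and `0` for `b > a`. -/
noncomputable def qChoose (a b : ℕ) : RatFunc ℚ :=
  if b ≤ a then qFact a / (qFact b * qFact (a - b)) else 0

lemma qInt_zero : qInt 0 = 0 := Finset.sum_range_zero _

lemma qInt_add (a b : ℕ) : qInt (a + b) = qInt a + qq ^ a * qInt b := by
  simp only [qInt, Finset.sum_range_add, Finset.mul_sum, pow_add]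

lemma qInt_ne_zero {n : ℕ} (hn : n ≠ 0) : qInt n ≠ 0 := by
  have hpoly : qInt n =
      algebraMap (Polynomial ℚ) (RatFunc ℚ) (∑ i ∈ Finset.range n, Polynomial.X ^ i) := by
    simp [qInt, qq, RatFunc.algebraMap_X]
  rw [hpoly]
  refine RatFunc.algebraMap_ne_zero fun h => hn ?_
  simpa [Polynomial.eval_finsetSum] using congrArg (Polynomial.eval 1) h

lemma qInt_add_mul_qInt_add (a b c : ℕ) :
    qInt (a + b) * qInt (b + c) - qq ^ b * qInt a * qInt c = qInt b * qInt (a + b + c) := by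
  rw [qInt_add a b, qInt_add b c, add_assoc, qInt_add a (b + c), qInt_add b c]
  ring

lemma qFact_succ (n : ℕ) : qFact (n + 1) = qFact n * qInt (n + 1) := Finset.prod_range_succ _ n

lemma qFact_ne_zero (n : ℕ) : qFact n ≠ 0 :=
  Finset.prod_ne_zero_iff.2 fun _ _ => qInt_ne_zero (Nat.succ_ne_zero _)

lemma qChoose_zero_right (a : ℕ) : qChoose a 0 = 1 := by
  rw [qChoose, if_pos (Nat.zero_le a), Nat.sub_zero, show qFact 0 = 1 from Finset.prod_range_zero _,
    one_mul, div_self (qFact_ne_zero a)]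

lemma qChoose_succ_succ (a b : ℕ) :
    qChoose (a + 1) (b + 1) = qChoose a b * (qInt (a + 1) / qInt (b + 1)) := by
  by_cases h : b ≤ a
  · rw [qChoose, qChoose, if_pos (by omega), if_pos h, Nat.add_sub_add_right, qFact_succ,
      qFact_succ]
    have := qInt_ne_zero (Nat.succ_ne_zero a)
    have := qInt_ne_zero (Nat.succ_ne_zero b)
    have := qFact_ne_zero a
    have := qFact_ne_zero b
    have := qFact_ne_zero (a - b)
    field_simp
  · rw [qChoose, qChoose, if_neg (by omega), if_neg h, zero_mul]

lemma qChoose_succ_right (a b : ℕ) :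
    qChoose a (b + 1) = qChoose a b * (qInt (a - b) / qInt (b + 1)) := by
  rcases lt_trichotomy b a with h | rfl | h
  · obtain ⟨c, rfl⟩ := Nat.exists_eq_add_of_lt h
    rw [qChoose, qChoose, if_pos (by omega), if_pos (by omega),
      show b + c + 1 - (b + 1) = c by omega, show b + c + 1 - b = c + 1 by omega, qFact_succ b,
      qFact_succ c]
    have := qInt_ne_zero (Nat.succ_ne_zero b)
    have := qInt_ne_zero (Nat.succ_ne_zero c)
    have := qFact_ne_zero b
    have := qFact_ne_zero c
    field_simp
  · rw [qChoose, if_neg (by omega), Nat.sub_self, qInt_zero]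
    simp
  · rw [qChoose, qChoose, if_neg (by omega), if_neg (by omega), zero_mul]

lemma toNat_mul_sub_one_div_two (s : ℕ) : ((s : ℤ) * (s - 1) / 2).toNat = s.choose 2 := by
  rcases s with _ | s
  · rfl
  · rw [Nat.choose_two_right, Nat.add_sub_cancel, ← Int.toNat_natCast (_ / 2)]
    push_cast
    ring_nf

lemma Matrix.det_eq_of_row_zero_eq_zero_of_two_le {R : Type*} [CommRing R] {n : ℕ}
    (M : Matrix (Fin (n + 2)) (Fin (n + 2)) R)
    (h : ∀ j : Fin (n + 2), 2 ≤ (j : ℕ) → M 0 j = 0) :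
    M.det = M 0 0 * (M.submatrix Fin.succ Fin.succ).det
      - M 0 1 * (M.submatrix Fin.succ (Fin.succAbove 1)).det := by
  rw [Matrix.det_succ_row_zero, Fin.sum_univ_succ, Fin.sum_univ_succ,
    Finset.sum_eq_zero fun j _ => by rw [h j.succ.succ (by simp), mul_zero, zero_mul]]
  simp only [Fin.val_zero, Fin.val_one, pow_zero, pow_one, one_mul, neg_one_mul,
    Fin.succAbove_zero, Fin.succ_zero_eq_one, add_zero]
  ring

noncomputable def hessEntry (k i j : ℕ) : RatFunc ℚ :=
  if j ≤ i + 1 then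
    qq ^ (((i : ℤ) - (j : ℤ)) * ((i : ℤ) - (j : ℤ) - 1) / 2).toNat *
      (qInt (2 * i + k + 1) / qInt (i + j + k)) * qChoose (i + j + k) (i + 1 - j)
  else 0

lemma hessEntry_succ_succ (k i j : ℕ) : hessEntry k (i + 1) (j + 1) = hessEntry (k + 2) i j := by
  simp only [hessEntry, Nat.cast_succ, add_sub_add_right_eq_sub, Nat.add_le_add_iff_right,
    show 2 * (i + 1) + k = 2 * i + (k + 2) by ring,
    show i + 1 + (j + 1) + k = i + j + (k + 2) by ring,
    Nat.add_sub_add_right]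

lemma hessEntry_self_succ (k i : ℕ) : hessEntry k i (i + 1) = qq := by
  have hexp : (((i : ℤ) - ((i + 1 : ℕ) : ℤ)) * ((i : ℤ) - ((i + 1 : ℕ) : ℤ) - 1) / 2).toNat
      = 1 := by
    norm_num
  rw [hessEntry, if_pos le_rfl, hexp, show i + (i + 1) + k = 2 * i + k + 1 by ring,
    div_self (qInt_ne_zero (Nat.succ_ne_zero _)), Nat.sub_self, qChoose_zero_right, pow_one,
    mul_one, mul_one]

lemma hessEntry_of_succ_lt {k i j : ℕ} (h : i + 1 < j) : hessEntry k i j = 0 := if_neg (by omega)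

lemma hessEntry_zero_right (k s : ℕ) :
    hessEntry k s 0 =
      qq ^ s.choose 2 * (qInt (2 * s + k + 1) / qInt (s + k)) * qChoose (s + k) (s + 1) := by
  simp [hessEntry, toNat_mul_sub_one_div_two]

lemma hessEntry_succ_zero_right (t s : ℕ) :
    hessEntry (t + 1) s 0 =
      qq ^ s.choose 2 * qChoose (s + t) s * (qInt (2 * s + t + 2) / qInt (s + 1)) := by
  rw [hessEntry_zero_right, show s + (t + 1) = s + t + 1 by ring, qChoose_succ_succ]
  have := qInt_ne_zero (Nat.succ_ne_zero (s + t))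
  field_simp
  ring_nf

/-- Rows `s, …, s + n - 1` and columns `0, s + 1, …, s + n - 1` of the matrix
`(hessEntry k i j)`, since `hessEntry (k + 2 * s) r c = hessEntry k (r + s) (c + s)`. -/
noncomputable def borderedMatrix (n k s : ℕ) : Matrix (Fin n) (Fin n) (RatFunc ℚ) :=
  Matrix.of fun r c => if (c : ℕ) = 0 then hessEntry k (s + r) 0 else hessEntry (k + 2 * s) r c

lemma borderedMatrix_zero (n k : ℕ) :
    borderedMatrix n k 0 = Matrix.of fun r c : Fin n => hessEntry k r c := by
  ext r c
  by_cases hc : (c : ℕ) = 0 <;> simp [borderedMatrix, hc]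

lemma borderedMatrix_submatrix_zero (n k s : ℕ) :
    (borderedMatrix (n + 1) k s).submatrix Fin.succ Fin.succ =
      borderedMatrix n (k + 2 * s + 2) 0 := by
  rw [borderedMatrix_zero]
  ext r c
  simp only [borderedMatrix, Matrix.submatrix_apply, Matrix.of_apply, Fin.val_succ,
    Nat.succ_ne_zero, if_false, hessEntry_succ_succ]

lemma borderedMatrix_submatrix_one (n k s : ℕ) :
    (borderedMatrix (n + 2) k s).submatrix Fin.succ (Fin.succAbove 1) =
      borderedMatrix (n + 1) k (s + 1) := by
  ext r c
  cases c using Fin.cases with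
  | zero => simp [borderedMatrix, ← add_assoc, Nat.add_right_comm s 1]
  | succ c =>
    have : Fin.succAbove 1 c.succ = c.succ.succ :=
      Fin.succAbove_of_le_castSucc _ _ (by simp [Fin.le_def])
    simp [borderedMatrix, this, hessEntry_succ_succ, mul_add, add_assoc]

lemma det_borderedMatrix_succ_succ (n k s : ℕ) :
    (borderedMatrix (n + 2) k s).det =
      hessEntry k s 0 * (borderedMatrix (n + 1) (k + 2 * s + 2) 0).det
        - qq * (borderedMatrix (n + 1) k (s + 1)).det := by
  rw [Matrix.det_eq_of_row_zero_eq_zero_of_two_le _ fun j hj => ?_, borderedMatrix_submatrix_zero,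
    borderedMatrix_submatrix_one]
  · simp [borderedMatrix, hessEntry_self_succ (k + 2 * s) 0]
  · rw [borderedMatrix, Matrix.of_apply, if_neg (by omega)]
    exact hessEntry_of_succ_lt (by rw [Fin.val_zero]; omega)

noncomputable def borderedDet (n t s : ℕ) : RatFunc ℚ :=
  qq ^ s.choose 2 * qChoose (s + t) s * (qInt (n + 2 * s + t + 2) / qInt (n + s + 1)) *
    qChoose (2 * (n + s) + t + 2) n

lemma borderedDet_succ (n t s : ℕ) :
    borderedDet (n + 1) t s
      = hessEntry (t + 1) s 0 * borderedDet n (t + 2 * s + 2) 0 - qq * borderedDet n t (s + 1) := by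
  have key := qInt_add_mul_qInt_add (s + t + 1) (s + 1) (n + 1)
  have hN := qChoose_succ_right (2 * (n + 1 + s) + t + 2) n
  rw [show 2 * (n + 1 + s) + t + 2 - n = n + 2 * s + t + 4 by omega] at hN
  simp only [borderedDet, hessEntry_succ_zero_right, qChoose_zero_right, Nat.choose_zero_succ,
    Nat.choose_succ_succ', Nat.choose_one_right, pow_zero, mul_one, one_mul, hN]
  rw [show s + 1 + t = s + t + 1 by ring, qChoose_succ_succ]
  have h₁ := qInt_ne_zero n.add_one_ne_zero
  have h₂ := qInt_ne_zero s.add_one_ne_zero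
  have h₃ := qInt_ne_zero (n + s + 1).add_one_ne_zero
  ring_nf at key h₁ h₂ h₃ ⊢
  field_simp
  linear_combination (norm := ring_nf) -qq ^ s.choose 2 * qChoose (s + t) s *
    qChoose (2 * (n + 1 + s) + t + 2) n * qInt (n + 2 * s + t + 4) * key

theorem det_borderedMatrix (n t s : ℕ) :
    (borderedMatrix (n + 1) (t + 1) s).det = borderedDet n t s := by
  induction n generalizing t s with
  | zero => simp [Matrix.det_unique, borderedMatrix, borderedDet, hessEntry_succ_zero_right,
      qChoose_zero_right]
  | succ n ih =>
    rw [det_borderedMatrix_succ_succ, show t + 1 + 2 * s + 2 = t + 2 * s + 2 + 1 by ring, ih, ih,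
      borderedDet_succ]

lemma borderedDet_zero_right (n t : ℕ) : borderedDet n t 0 = qChoose (2 * n + t + 2) (n + 1) := by
  rw [borderedDet, qChoose_succ_right, show 2 * n + t + 2 - n = n + t + 2 by omega]
  simp [qChoose_zero_right, mul_comm]

theorem stmt_17 (n k : ℕ) (hk : 1 ≤ k) :
    Matrix.det (Matrix.of fun i j : Fin n =>
        if (j : ℕ) ≤ (i : ℕ) + 1 then
          qq ^ ((((i : ℕ) : ℤ) - ((j : ℕ) : ℤ)) * (((i : ℕ) : ℤ) - ((j : ℕ) : ℤ) - 1) / 2).toNat *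
            (qInt (2 * (i : ℕ) + k + 1) / qInt ((i : ℕ) + (j : ℕ) + k)) *
            qChoose ((i : ℕ) + (j : ℕ) + k) ((i : ℕ) + 1 - (j : ℕ))
        else 0)
      = qChoose (2 * n + k - 1) n := by
  obtain ⟨t, rfl⟩ := Nat.exists_eq_add_of_le' hk
  change (Matrix.of fun i j : Fin n => hessEntry (t + 1) i j).det = _
  rw [← borderedMatrix_zero]
  rcases n with _ | n
  · simp [qChoose_zero_right]
  · rw [det_borderedMatrix, borderedDet_zero_right]
    congr 1
    omega
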